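/- Fix γ_l, γ_r > 2 and let B(a,b) = Γ(a)Γ(b)/Γ(a+b) denote the Beta function. Let K be a compact subset of the open region {(π_l, π_r, k_l, k_r) ∈ ℝ⁴ : 0 < π_l, 0 < π_r, π_l + π_r < 1, 0 < k_l < 1, 0 < k_r < 1}, and for p = (π_l, π_r, k_l, k_r) ∈ K let b_p(u) = 1 + (π_l B(k_l, γ_l)^{-1} u^{k_l-1}(1-u)^{γ_l-1} + π_r B(γ_r, k_r)^{-1} u^{γ_r-1}(1-u)^{k_r-1}) / (1 - π_l - π_r) for u ∈ (0,1). Then for every M > 0 there exists δ ∈ (0, 1/2) such that for all p ∈ K: the derivative b_p'(u) < −M for all u ∈ (0, δ), and b_p'(u) > M for all u ∈ (1 − δ, 1). -/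

import Mathlib

open Set Filter MeasureTheory

/-- The Beta function `B(a,b) = Γ(a)Γ(b)/Γ(a+b)`. -/
noncomputable def betaFn (a b : ℝ) : ℝ := Real.Gamma a * Real.Gamma b / Real.Gamma (a + b)

/-- The open parameter region `{(π_l, π_r, k_l, k_r) : 0 < π_l, 0 < π_r, π_l + π_r < 1,
0 < k_l < 1, 0 < k_r < 1}`. -/
def paramRegion : Set (ℝ × ℝ × ℝ × ℝ) :=
  {p | 0 < p.1 ∧ 0 < p.2.1 ∧ p.1 + p.2.1 < 1 ∧
    0 < p.2.2.1 ∧ p.2.2.1 < 1 ∧ 0 < p.2.2.2 ∧ p.2.2.2 < 1}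

/-- The reciprocal assessor `b_p(u)` of the working beta-mixture model with parameters
`p = (π_l, π_r, k_l, k_r)` and fixed shape parameters `γ_l, γ_r`. -/
noncomputable def bAssessor (γl γr : ℝ) (p : ℝ × ℝ × ℝ × ℝ) (u : ℝ) : ℝ :=
  1 + (p.1 * (betaFn p.2.2.1 γl)⁻¹ * u ^ (p.2.2.1 - 1) * (1 - u) ^ (γl - 1)
    + p.2.1 * (betaFn γr p.2.2.2)⁻¹ * u ^ (γr - 1) * (1 - u) ^ (p.2.2.2 - 1))
    / (1 - p.1 - p.2.1)

lemma hasDerivAt_aux (r s u : ℝ) (hu : u ≠ 0) (hu1 : (1:ℝ) - u ≠ 0) :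
    HasDerivAt (fun v : ℝ => v ^ r * (1 - v) ^ s)
      (r * u ^ (r-1) * (1-u) ^ s - s * (1-u) ^ (s-1) * u ^ r) u := by
  have hA : HasDerivAt (fun v : ℝ => v ^ r) (r * u ^ (r-1)) u :=
    Real.hasDerivAt_rpow_const (Or.inl hu)
  have hB0 : HasDerivAt (fun v : ℝ => (1 - v)) (-1) u := by
    simpa using (hasDerivAt_id u).const_sub 1
  have hB : HasDerivAt (fun v : ℝ => (1 - v) ^ s) (s * (1-u) ^ (s-1) * (-1)) u := by
    have := (Real.hasDerivAt_rpow_const (x := 1-u) (p := s) (Or.inl hu1)).comp u hB0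
    simpa [Function.comp_def] using this
  have H : HasDerivAt (fun v : ℝ => v ^ r * (1 - v) ^ s) _ u := hA.mul hB
  convert H using 1
  ring

lemma hasDerivAt_bAssessor (γl γr πl πr kl kr u : ℝ) (hu : u ≠ 0) (hu1 : (1:ℝ) - u ≠ 0) :
    HasDerivAt (bAssessor γl γr (πl, πr, kl, kr))
      ((πl * (betaFn kl γl)⁻¹ *
          ((kl-1) * u ^ (kl-2) * (1-u) ^ (γl-1) - (γl-1) * (1-u) ^ (γl-2) * u ^ (kl-1))
        + πr * (betaFn γr kr)⁻¹ *
          ((γr-1) * u ^ (γr-2) * (1-u) ^ (kr-1) - (kr-1) * (1-u) ^ (kr-2) * u ^ (γr-1)))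
        / (1 - πl - πr)) u := by
  have h1 := hasDerivAt_aux (kl-1) (γl-1) u hu hu1
  have h2 := hasDerivAt_aux (γr-1) (kr-1) u hu hu1
  have H := (((h1.const_mul (πl * (betaFn kl γl)⁻¹)).add
      (h2.const_mul (πr * (betaFn γr kr)⁻¹))).div_const (1 - πl - πr)).const_add 1
  have hfun : (fun u : ℝ => 1 + (πl * (betaFn kl γl)⁻¹ * (u ^ (kl-1) * (1-u) ^ (γl-1))
      + πr * (betaFn γr kr)⁻¹ * (u ^ (γr-1) * (1-u) ^ (kr-1))) / (1 - πl - πr))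
      = bAssessor γl γr (πl, πr, kl, kr) := by
    funext v; simp only [bAssessor]; ring
  simp only [Pi.add_apply] at H; rw [hfun] at H
  rw [show kl-1-1 = kl-2 by ring, show γl-1-1 = γl-2 by ring, show γr-1-1 = γr-2 by ring,
    show kr-1-1 = kr-2 by ring] at H
  exact H

lemma bAssessor_symm (γl γr πl πr kl kr u : ℝ) :
    bAssessor γl γr (πl, πr, kl, kr) u = bAssessor γr γl (πr, πl, kr, kl) (1 - u) := by
  simp only [bAssessor, betaFn, sub_sub_cancel]
  rw [add_comm kr γr, add_comm kl γl]
  ring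

lemma continuousAt_Gamma_pos {x : ℝ} (hx : 0 < x) : ContinuousAt Real.Gamma x :=
  (Real.differentiableAt_Gamma
    (fun m => ((neg_nonpos.mpr (Nat.cast_nonneg m)).trans_lt hx).ne')).continuousAt

lemma betaFn_pos {a b : ℝ} (ha : 0 < a) (hb : 0 < b) : 0 < betaFn a b :=
  div_pos (mul_pos (Real.Gamma_pos_of_pos ha) (Real.Gamma_pos_of_pos hb))
    (Real.Gamma_pos_of_pos (by linarith))

lemma continuousAt_betaFn_left (γ : ℝ) (hγ : 0 < γ) {x : ℝ} (hx : 0 < x) :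
    ContinuousAt (fun x : ℝ => betaFn x γ) x := by
  unfold betaFn
  have h2 : ContinuousAt (fun x : ℝ => Real.Gamma (x + γ)) x :=
    (continuousAt_Gamma_pos (by linarith)).comp (continuousAt_id.add continuousAt_const)
  exact ((continuousAt_Gamma_pos hx).mul continuousAt_const).div h2
    (Real.Gamma_pos_of_pos (by linarith)).ne'

lemma continuousAt_betaFn_right (γ : ℝ) (hγ : 0 < γ) {x : ℝ} (hx : 0 < x) :
    ContinuousAt (fun x : ℝ => betaFn γ x) x := by
  unfold betaFn
  have h2 : ContinuousAt (fun x : ℝ => Real.Gamma (γ + x)) x :=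
    (continuousAt_Gamma_pos (by linarith)).comp (continuousAt_const.add continuousAt_id)
  exact (continuousAt_const.mul (continuousAt_Gamma_pos hx)).div h2
    (Real.Gamma_pos_of_pos (by linarith)).ne'

set_option maxHeartbeats 1000000 in
/-- Key quantitative lemma: uniform divergence of the derivative to `-∞` near `0`. -/
lemma key_lemma (γl γr : ℝ) (hγl : 2 < γl) (hγr : 2 < γr)
    (K : Set (ℝ × ℝ × ℝ × ℝ)) (hK : IsCompact K) (hKsub : K ⊆ paramRegion)
    (M : ℝ) (hM : 0 < M) :
    ∃ δ ∈ Set.Ioo (0:ℝ) (1/2), ∀ p ∈ K, ∀ u ∈ Set.Ioo (0:ℝ) δ,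
      deriv (bAssessor γl γr p) u < -M := by
  rcases K.eq_empty_or_nonempty with rfl | hne
  · exact ⟨1/4, by norm_num, fun p hp => absurd hp (by simp)⟩
  have hproj : Continuous (fun p : ℝ × ℝ × ℝ × ℝ => p.2.2.1) := by fun_prop
  have hproj2 : Continuous (fun p : ℝ × ℝ × ℝ × ℝ => p.2.2.2) := by fun_prop
  have hclC : ContinuousOn (fun p : ℝ × ℝ × ℝ × ℝ => p.1 * (betaFn p.2.2.1 γl)⁻¹) K := by
    intro p hp
    obtain ⟨h1, h2, h3, h4, h5, h6, h7⟩ := hKsub hp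
    exact (continuous_fst.continuousAt.mul
      ((ContinuousAt.comp (f := fun p : ℝ×ℝ×ℝ×ℝ => p.2.2.1)
          (continuousAt_betaFn_left γl (by linarith) h4) hproj.continuousAt).inv₀
        (betaFn_pos h4 (by linarith)).ne')).continuousWithinAt
  have hcrC : ContinuousOn (fun p : ℝ × ℝ × ℝ × ℝ => p.2.1 * (betaFn γr p.2.2.2)⁻¹) K := by
    intro p hp
    obtain ⟨h1, h2, h3, h4, h5, h6, h7⟩ := hKsub hp
    exact ((by fun_prop : Continuous (fun p : ℝ×ℝ×ℝ×ℝ => p.2.1)).continuousAt.mul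
      ((ContinuousAt.comp (f := fun p : ℝ×ℝ×ℝ×ℝ => p.2.2.2)
          (continuousAt_betaFn_right γr (by linarith) h6) hproj2.continuousAt).inv₀
        (betaFn_pos (by linarith) h6).ne')).continuousWithinAt
  obtain ⟨p1, hp1K, hmin1⟩ := hK.exists_isMinOn hne hclC
  obtain ⟨p2, hp2K, hmin2⟩ := hK.exists_isMinOn hne
    ((continuous_const.sub hproj).continuousOn :
      ContinuousOn (fun p : ℝ×ℝ×ℝ×ℝ => 1 - p.2.2.1) K)
  obtain ⟨p3, hp3K, hmax3⟩ := hK.exists_isMaxOn hne hcrC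
  obtain ⟨c1, hc1def⟩ : ∃ x : ℝ, x = p1.1 * (betaFn p1.2.2.1 γl)⁻¹ := ⟨_, rfl⟩
  obtain ⟨εk, hεkdef⟩ : ∃ x : ℝ, x = 1 - p2.2.2.1 := ⟨_, rfl⟩
  obtain ⟨C2, hC2def⟩ : ∃ x : ℝ, x = p3.2.1 * (betaFn γr p3.2.2.2)⁻¹ := ⟨_, rfl⟩
  have hc1 : 0 < c1 := by
    obtain ⟨h1, h2, h3, h4, h5, h6, h7⟩ := hKsub hp1K
    rw [hc1def]
    exact mul_pos h1 (inv_pos.mpr (betaFn_pos h4 (by linarith)))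
  have hεk : 0 < εk := by
    obtain ⟨h1, h2, h3, h4, h5, h6, h7⟩ := hKsub hp2K
    rw [hεkdef]; linarith
  have hC2 : 0 < C2 := by
    obtain ⟨h1, h2, h3, h4, h5, h6, h7⟩ := hKsub hp3K
    rw [hC2def]
    exact mul_pos h2 (inv_pos.mpr (betaFn_pos (by linarith) h6))
  obtain ⟨A, hAdef⟩ : ∃ x : ℝ, x = c1 * εk * (1/2 : ℝ) ^ (γl - 1 : ℝ) := ⟨_, rfl⟩
  have hA : 0 < A := hAdef ▸
    mul_pos (mul_pos hc1 hεk) (Real.rpow_pos_of_pos (by norm_num) _)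
  obtain ⟨B, hBdef⟩ : ∃ x : ℝ, x = 2 * C2 * (γr - 1) + 4 * C2 := ⟨_, rfl⟩
  have hB : 0 < B := by
    rw [hBdef]
    have t := mul_pos hC2 (show (0:ℝ) < γr - 1 by linarith)
    nlinarith [t, hC2]
  obtain ⟨δ, hδdef⟩ : ∃ x : ℝ, x = min (1/4) (A / (B + M + 1)) := ⟨_, rfl⟩
  have hδ0 : 0 < δ := hδdef ▸ lt_min (by norm_num) (div_pos hA (by linarith))
  have hδ4 : δ ≤ 1/4 := hδdef ▸ min_le_left _ _
  refine ⟨δ, ⟨hδ0, lt_of_le_of_lt hδ4 (by norm_num)⟩, ?_⟩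
  intro p hpK u hu
  obtain ⟨πl, πr, kl, kr⟩ := p
  obtain ⟨h1, h2, h3, h4, h5, h6, h7⟩ := hKsub hpK
  obtain ⟨hu0, huδ⟩ := hu
  have hu14 : u < 1/4 := lt_of_lt_of_le huδ hδ4
  have hu1 : u < 1 := by linarith
  have h1u : 0 < 1 - u := by linarith
  rw [(hasDerivAt_bAssessor γl γr πl πr kl kr u hu0.ne' (by linarith)).deriv]
  obtain ⟨CL, hCLdef⟩ : ∃ x : ℝ, x = πl * (betaFn kl γl)⁻¹ := ⟨_, rfl⟩
  obtain ⟨CR, hCRdef⟩ : ∃ x : ℝ, x = πr * (betaFn γr kr)⁻¹ := ⟨_, rfl⟩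
  rw [← hCLdef, ← hCRdef]
  have hCL : c1 ≤ CL := by rw [hc1def, hCLdef]; exact hmin1 hpK
  have hCR : CR ≤ C2 := by rw [hC2def, hCRdef]; exact hmax3 hpK
  have hklε : εk ≤ 1 - kl := by rw [hεkdef]; exact hmin2 hpK
  have hCLpos : 0 < CL := lt_of_lt_of_le hc1 hCL
  have hCRpos : 0 < CR := by
    rw [hCRdef]; exact mul_pos h2 (inv_pos.mpr (betaFn_pos (by linarith) h6))
  have hδinv : 0 < δ⁻¹ := inv_pos.mpr hδ0
  -- rpow estimates
  have e1 : δ⁻¹ ≤ u ^ (kl - 2 : ℝ) := by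
    calc δ⁻¹ ≤ u⁻¹ := by gcongr
      _ = u ^ (-1 : ℝ) := (Real.rpow_neg_one u).symm
      _ ≤ u ^ (kl - 2 : ℝ) := Real.rpow_le_rpow_of_exponent_ge hu0 hu1.le (by linarith)
  have e2 : (1/2 : ℝ) ^ (γl - 1 : ℝ) ≤ (1-u) ^ (γl - 1 : ℝ) :=
    Real.rpow_le_rpow (by norm_num) (by linarith) (by linarith)
  have e3 : (0:ℝ) ≤ (1-u) ^ (γl - 2 : ℝ) := Real.rpow_nonneg h1u.le _
  have e4 : (0:ℝ) ≤ u ^ (kl - 1 : ℝ) := Real.rpow_nonneg hu0.le _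
  have hinv2 : (1-u)⁻¹ ≤ 2 := by
    have h := one_div_le_one_div_of_le (by norm_num : (0:ℝ) < 1/2)
      (by linarith : (1:ℝ)/2 ≤ 1 - u)
    norm_num [one_div] at h
    exact h
  have g1 : u ^ (γr - 2 : ℝ) ≤ 1 := Real.rpow_le_one hu0.le hu1.le (by linarith)
  have g1' : (0:ℝ) ≤ u ^ (γr - 2 : ℝ) := Real.rpow_nonneg hu0.le _
  have g2 : (1-u) ^ (kr - 1 : ℝ) ≤ 2 := by
    calc (1-u) ^ (kr - 1 : ℝ) ≤ (1-u) ^ (-1 : ℝ) :=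
          Real.rpow_le_rpow_of_exponent_ge h1u (by linarith) (by linarith)
      _ = (1-u)⁻¹ := Real.rpow_neg_one _
      _ ≤ 2 := hinv2
  have g2' : (0:ℝ) ≤ (1-u) ^ (kr - 1 : ℝ) := Real.rpow_nonneg h1u.le _
  have g3 : (1-u) ^ (kr - 2 : ℝ) ≤ 4 := by
    have heq : (1-u) ^ (kr - 2 : ℝ) = (1-u) ^ (kr - 1 : ℝ) * (1-u) ^ (-1 : ℝ) := by
      rw [← Real.rpow_add h1u]; ring_nf
    rw [heq, Real.rpow_neg_one]
    calc (1-u) ^ (kr - 1 : ℝ) * (1-u)⁻¹ ≤ 2 * 2 :=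
          mul_le_mul g2 hinv2 (inv_pos.mpr h1u).le (by norm_num)
      _ = 4 := by norm_num
  have g3' : (0:ℝ) ≤ (1-u) ^ (kr - 2 : ℝ) := Real.rpow_nonneg h1u.le _
  have g4 : u ^ (γr - 1 : ℝ) ≤ 1 := Real.rpow_le_one hu0.le hu1.le (by linarith)
  have g4' : (0:ℝ) ≤ u ^ (γr - 1 : ℝ) := Real.rpow_nonneg hu0.le _
  -- term bounds
  have hT1 : CL * ((kl-1) * u ^ (kl-2 : ℝ) * (1-u) ^ (γl-1 : ℝ)) ≤ -(A * δ⁻¹) := by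
    have s1 : (kl-1) * u ^ (kl-2 : ℝ) ≤ -εk * δ⁻¹ := by
      have a1 : (kl-1) * u ^ (kl-2 : ℝ) ≤ (kl-1) * δ⁻¹ :=
        mul_le_mul_of_nonpos_left e1 (by linarith)
      have a2 : (kl-1) * δ⁻¹ ≤ -εk * δ⁻¹ :=
        mul_le_mul_of_nonneg_right (by linarith) hδinv.le
      linarith
    have hs1neg : -εk * δ⁻¹ ≤ 0 := by
      rw [neg_mul]; exact neg_nonpos.mpr (mul_nonneg hεk.le hδinv.le)
    have s2 : (kl-1) * u ^ (kl-2 : ℝ) * (1-u) ^ (γl-1 : ℝ)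
        ≤ (-εk * δ⁻¹) * ((1/2 : ℝ) ^ (γl-1 : ℝ)) := by
      calc (kl-1) * u ^ (kl-2 : ℝ) * (1-u) ^ (γl-1 : ℝ)
          ≤ (-εk * δ⁻¹) * (1-u) ^ (γl-1 : ℝ) :=
            mul_le_mul_of_nonneg_right s1 (Real.rpow_nonneg h1u.le _)
        _ ≤ (-εk * δ⁻¹) * ((1/2 : ℝ) ^ (γl-1 : ℝ)) :=
            mul_le_mul_of_nonpos_left e2 hs1neg
    have hhalf : (0:ℝ) < (1/2 : ℝ) ^ (γl-1 : ℝ) := Real.rpow_pos_of_pos (by norm_num) _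
    have t0 : (kl-1) * u ^ (kl-2 : ℝ) * (1-u) ^ (γl-1 : ℝ) ≤ 0 :=
      s2.trans (mul_nonpos_iff.mpr (Or.inr ⟨hs1neg, hhalf.le⟩))
    calc CL * ((kl-1) * u ^ (kl-2 : ℝ) * (1-u) ^ (γl-1 : ℝ))
        ≤ c1 * ((kl-1) * u ^ (kl-2 : ℝ) * (1-u) ^ (γl-1 : ℝ)) :=
          mul_le_mul_of_nonpos_right hCL t0
      _ ≤ c1 * ((-εk * δ⁻¹) * ((1/2 : ℝ) ^ (γl-1 : ℝ))) :=
          mul_le_mul_of_nonneg_left s2 hc1.le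
      _ = -(A * δ⁻¹) := by rw [hAdef]; ring
  have hT2 : (0:ℝ) ≤ CL * ((γl-1) * (1-u) ^ (γl-2 : ℝ) * u ^ (kl-1 : ℝ)) :=
    mul_nonneg hCLpos.le (mul_nonneg (mul_nonneg (by linarith) e3) e4)
  have hT3 : CR * ((γr-1) * u ^ (γr-2 : ℝ) * (1-u) ^ (kr-1 : ℝ)) ≤ 2 * C2 * (γr-1) := by
    have t1 : (γr-1) * u ^ (γr-2 : ℝ) ≤ (γr-1) * 1 :=
      mul_le_mul_of_nonneg_left g1 (by linarith)
    have t2 : (γr-1) * u ^ (γr-2 : ℝ) * (1-u) ^ (kr-1 : ℝ) ≤ ((γr-1) * 1) * 2 :=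
      mul_le_mul t1 g2 g2' (by linarith)
    have t3 : (0:ℝ) ≤ (γr-1) * u ^ (γr-2 : ℝ) * (1-u) ^ (kr-1 : ℝ) :=
      mul_nonneg (mul_nonneg (by linarith) g1') g2'
    calc CR * ((γr-1) * u ^ (γr-2 : ℝ) * (1-u) ^ (kr-1 : ℝ)) ≤ C2 * (((γr-1) * 1) * 2) :=
          mul_le_mul hCR t2 t3 hC2.le
      _ = 2 * C2 * (γr-1) := by ring
  have hT4 : -(CR * ((kr-1) * (1-u) ^ (kr-2 : ℝ) * u ^ (γr-1 : ℝ))) ≤ 4 * C2 := by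
    have heq : -(CR * ((kr-1) * (1-u) ^ (kr-2 : ℝ) * u ^ (γr-1 : ℝ)))
        = CR * ((1-kr) * (1-u) ^ (kr-2 : ℝ) * u ^ (γr-1 : ℝ)) := by ring
    rw [heq]
    have t1 : (1-kr) * (1-u) ^ (kr-2 : ℝ) ≤ 1 * 4 :=
      mul_le_mul (by linarith) g3 g3' (by norm_num)
    have t2 : (1-kr) * (1-u) ^ (kr-2 : ℝ) * u ^ (γr-1 : ℝ) ≤ (1 * 4) * 1 :=
      mul_le_mul t1 g4 g4' (by norm_num)
    have t3 : (0:ℝ) ≤ (1-kr) * (1-u) ^ (kr-2 : ℝ) * u ^ (γr-1 : ℝ) :=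
      mul_nonneg (mul_nonneg (by linarith) g3') g4'
    calc CR * ((1-kr) * (1-u) ^ (kr-2 : ℝ) * u ^ (γr-1 : ℝ)) ≤ C2 * ((1 * 4) * 1) :=
          mul_le_mul hCR t2 t3 hC2.le
      _ = 4 * C2 := by ring
  -- assemble
  have hAδ : B + M + 1 ≤ A * δ⁻¹ := by
    have hδle : δ ≤ A / (B + M + 1) := hδdef ▸ min_le_right _ _
    have h' : (B + M + 1) * δ ≤ A := by
      rw [mul_comm]
      rw [← le_div_iff₀ (by linarith : (0:ℝ) < B + M + 1)]
      exact hδle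
    have h'' : B + M + 1 ≤ A / δ := (le_div_iff₀ hδ0).mpr h'
    rwa [div_eq_mul_inv] at h''
  have hD0 : (0:ℝ) < 1 - πl - πr := by linarith
  rw [div_lt_iff₀ hD0]
  have expand : CL * ((kl-1) * u ^ (kl-2 : ℝ) * (1-u) ^ (γl-1 : ℝ)
        - (γl-1) * (1-u) ^ (γl-2 : ℝ) * u ^ (kl-1 : ℝ))
      + CR * ((γr-1) * u ^ (γr-2 : ℝ) * (1-u) ^ (kr-1 : ℝ)
        - (kr-1) * (1-u) ^ (kr-2 : ℝ) * u ^ (γr-1 : ℝ))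
      = CL * ((kl-1) * u ^ (kl-2 : ℝ) * (1-u) ^ (γl-1 : ℝ))
        - CL * ((γl-1) * (1-u) ^ (γl-2 : ℝ) * u ^ (kl-1 : ℝ))
        + CR * ((γr-1) * u ^ (γr-2 : ℝ) * (1-u) ^ (kr-1 : ℝ))
        + (-(CR * ((kr-1) * (1-u) ^ (kr-2 : ℝ) * u ^ (γr-1 : ℝ)))) := by ring
  rw [expand]
  have hsum : CL * ((kl-1) * u ^ (kl-2 : ℝ) * (1-u) ^ (γl-1 : ℝ))
      - CL * ((γl-1) * (1-u) ^ (γl-2 : ℝ) * u ^ (kl-1 : ℝ))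
      + CR * ((γr-1) * u ^ (γr-2 : ℝ) * (1-u) ^ (kr-1 : ℝ))
      + (-(CR * ((kr-1) * (1-u) ^ (kr-2 : ℝ) * u ^ (γr-1 : ℝ))))
      ≤ -(A * δ⁻¹) + 2 * C2 * (γr-1) + 4 * C2 := by
    linarith [hT1, hT2, hT3, hT4]
  have h8 : 0 < M * πl := mul_pos hM h1
  have h9 : 0 < M * πr := mul_pos hM h2
  linarith [hsum, hAδ, hBdef, h8, h9]

/-- Display (uniformInftyLimit) in the proof of Lemma D.1(iii): the derivative of the
reciprocal assessor diverges to -∞ near 0 and to +∞ near 1, uniformly over a compact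
parameter set `K`. -/
theorem assessor_derivative_uniform_divergence (γl γr : ℝ) (hγl : 2 < γl) (hγr : 2 < γr)
    (K : Set (ℝ × ℝ × ℝ × ℝ)) (hK : IsCompact K) (hKsub : K ⊆ paramRegion) :
    ∀ M : ℝ, 0 < M →
      ∃ δ ∈ Set.Ioo (0 : ℝ) (1 / 2), ∀ p ∈ K,
        (∀ u ∈ Set.Ioo (0 : ℝ) δ, deriv (bAssessor γl γr p) u < -M) ∧
        (∀ u ∈ Set.Ioo (1 - δ) 1, M < deriv (bAssessor γl γr p) u) := by
  intro M hM
  obtain ⟨δ1, hδ1, H1⟩ := key_lemma γl γr hγl hγr K hK hKsub M hM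
  have hswc : Continuous (fun p : ℝ×ℝ×ℝ×ℝ => (p.2.1, p.1, p.2.2.2, p.2.2.1)) := by fun_prop
  have hK' : IsCompact ((fun p : ℝ×ℝ×ℝ×ℝ => (p.2.1, p.1, p.2.2.2, p.2.2.1)) '' K) :=
    hK.image hswc
  have hsub' : (fun p : ℝ×ℝ×ℝ×ℝ => (p.2.1, p.1, p.2.2.2, p.2.2.1)) '' K ⊆ paramRegion := by
    rintro q ⟨p, hp, rfl⟩
    obtain ⟨h1, h2, h3, h4, h5, h6, h7⟩ := hKsub hp
    exact ⟨h2, h1, by linarith, h6, h7, h4, h5⟩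
  obtain ⟨δ2, hδ2, H2⟩ := key_lemma γr γl hγr hγl _ hK' hsub' M hM
  refine ⟨min δ1 δ2, ⟨lt_min hδ1.1 hδ2.1, lt_of_le_of_lt (min_le_left _ _) hδ1.2⟩, ?_⟩
  intro p hp
  obtain ⟨πl, πr, kl, kr⟩ := p
  constructor
  · intro u hu
    exact H1 _ hp u ⟨hu.1, lt_of_lt_of_le hu.2 (min_le_left _ _)⟩
  · intro u hu
    obtain ⟨hu1, hu2⟩ := hu
    have hmem : ((πr, πl, kr, kl) : ℝ×ℝ×ℝ×ℝ)
        ∈ (fun p : ℝ×ℝ×ℝ×ℝ => (p.2.1, p.1, p.2.2.2, p.2.2.1)) '' K :=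
      ⟨(πl, πr, kl, kr), hp, rfl⟩
    have h2' := H2 _ hmem (1-u)
      ⟨by linarith, by linarith [min_le_right δ1 δ2]⟩
    have hfn : bAssessor γl γr (πl, πr, kl, kr)
        = fun w => bAssessor γr γl (πr, πl, kr, kl) (1-w) :=
      funext fun w => bAssessor_symm γl γr πl πr kl kr w
    rw [hfn, deriv_comp_const_sub]
    linarith [h2']
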